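/- Let H be a real Hilbert space, φ : H → ℝ a convex lower semicontinuous function with φ(y) ≥ φ(0) = 0 for all y ∈ H, and ε, ε' > 0. Then for all u, v ∈ H, ⟨(1/ε)·Dφ_ε(u) − (1/ε')·Dφ_{ε'}(v), u − v⟩ ≥ −(1/ε + 1/ε')·‖Dφ_ε(u)‖·‖Dφ_{ε'}(v)‖, where Dφ_ε(u) = u − J_ε(u). -/

import Mathlib

/-!
The proximal point `p = J_ε u` satisfies `(u - p)/ε ∈ ∂φ(p)`: compare `p` with the competitor
`p + t (w - p)`, use convexity, and let `t → 0`. Monotonicity of `∂φ` then gives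
`⟪(1/ε) Dφ_ε u - (1/ε') Dφ_ε' v, J_ε u - J_ε' v⟫ ≥ 0`, and after splitting
`u - v = (Dφ_ε u - Dφ_ε' v) + (J_ε u - J_ε' v)` what is left is `⟪s a - t b, a - b⟫`, which
Cauchy–Schwarz bounds below by `-(s + t) ‖a‖ ‖b‖`.
-/

open RealInnerProductSpace Filter Set Topology

lemma le_of_forall_le_add_mul {a b c : ℝ} (h : ∀ t ∈ Ioc (0 : ℝ) 1, a ≤ b + t * c) : a ≤ b := by
  have hlim : Tendsto (fun t : ℝ => b + t * c) (𝓝[>] 0) (𝓝 b) := by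
    simpa using ((by fun_prop : Continuous fun t : ℝ => b + t * c).tendsto 0).mono_left
      nhdsWithin_le_nhds
  exact ge_of_tendsto hlim (eventually_of_mem (Ioc_mem_nhdsGT one_pos) h)

section

variable {H : Type*} [NormedAddCommGroup H] [InnerProductSpace ℝ H]

def HasSubgradientAt (f : H → ℝ) (g x : H) : Prop := ∀ w, f x + ⟪g, w - x⟫ ≤ f w

def IsProxPoint (φ : H → ℝ) (ε : ℝ) (u p : H) : Prop :=
  ∀ w, (1/2) * ‖u - p‖^2 + ε * φ p ≤ (1/2) * ‖u - w‖^2 + ε * φ w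

theorem HasSubgradientAt.inner_sub_sub_nonneg {f : H → ℝ} {g h x y : H}
    (hg : HasSubgradientAt f g x) (hh : HasSubgradientAt f h y) : 0 ≤ ⟪g - h, x - y⟫ := by
  have hgy := hg y
  have hhx := hh x
  rw [← neg_sub x y, inner_neg_right] at hgy
  rw [inner_sub_left]
  linarith

theorem IsProxPoint.inner_sub_sub_le {φ : H → ℝ} {ε : ℝ} {u p : H} (hp : IsProxPoint φ ε u p)
    (hconv : ConvexOn ℝ univ φ) (hε : 0 ≤ ε) (w : H) :
    ⟪u - p, w - p⟫ ≤ ε * (φ w - φ p) := by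
  refine le_of_forall_le_add_mul (c := ‖w - p‖^2 / 2) fun t ⟨ht0, ht1⟩ => ?_
  have hconvex : φ (p + t • (w - p)) ≤ (1 - t) * φ p + t * φ w := by
    rw [show p + t • (w - p) = (1 - t) • p + t • w by module]
    exact hconv.2 (mem_univ p) (mem_univ w) (sub_nonneg.2 ht1) ht0.le (by ring)
  have hexpand : ‖u - (p + t • (w - p))‖^2 =
      ‖u - p‖^2 - 2 * t * ⟪u - p, w - p⟫ + t^2 * ‖w - p‖^2 := by
    rw [show u - (p + t • (w - p)) = (u - p) - t • (w - p) by abel, norm_sub_sq_real,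
      real_inner_smul_right, norm_smul, mul_pow, Real.norm_eq_abs, sq_abs]
    ring
  have hmin := hp (p + t • (w - p))
  have hscaled : t * ⟪u - p, w - p⟫ ≤ t * (ε * (φ w - φ p) + t * (‖w - p‖^2 / 2)) := by
    nlinarith [mul_le_mul_of_nonneg_left hconvex hε]
  exact le_of_mul_le_mul_left hscaled ht0

theorem IsProxPoint.hasSubgradientAt {φ : H → ℝ} {ε : ℝ} {u p : H} (hp : IsProxPoint φ ε u p)
    (hconv : ConvexOn ℝ univ φ) (hε : 0 < ε) : HasSubgradientAt φ ((1/ε) • (u - p)) p := fun w => by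
  have h := hp.inner_sub_sub_le hconv hε.le w
  have : (1/ε) * ⟪u - p, w - p⟫ ≤ φ w - φ p := by
    rw [div_mul_eq_mul_div, one_mul, div_le_iff₀ hε]; linarith
  rw [real_inner_smul_left]; linarith

theorem neg_mul_norm_mul_norm_le_inner_smul_sub_smul (a b : H) {s t : ℝ} (hs : 0 ≤ s) (ht : 0 ≤ t) :
    -(s + t) * (‖a‖ * ‖b‖) ≤ ⟪s • a - t • b, a - b⟫ := by
  have hab : ⟪a, b⟫ ≤ ‖a‖ * ‖b‖ := real_inner_le_norm a b
  rw [inner_sub_left, inner_sub_right, inner_sub_right, real_inner_smul_left, real_inner_smul_left,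
    real_inner_smul_left, real_inner_smul_left, real_inner_comm a b, real_inner_self_eq_norm_sq,
    real_inner_self_eq_norm_sq]
  nlinarith [mul_le_mul_of_nonneg_left hab hs, mul_le_mul_of_nonneg_left hab ht]

end

theorem stmt_9_general {H : Type*} [NormedAddCommGroup H] [InnerProductSpace ℝ H]
    (φ : H → ℝ) (hconv : ConvexOn ℝ Set.univ φ)
    (ε ε' : ℝ) (hε : 0 < ε) (hε' : 0 < ε')
    (Jε Jε' : H → H)
    (hJ : ∀ u v : H, (1/2) * ‖u - Jε u‖^2 + ε * φ (Jε u) ≤ (1/2) * ‖u - v‖^2 + ε * φ v)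
    (hJ' : ∀ u v : H, (1/2) * ‖u - Jε' u‖^2 + ε' * φ (Jε' u) ≤ (1/2) * ‖u - v‖^2 + ε' * φ v)
    (u v : H) :
    ⟪(1/ε) • (u - Jε u) - (1/ε') • (v - Jε' v), u - v⟫ ≥
      -(1/ε + 1/ε') * (‖u - Jε u‖ * ‖v - Jε' v‖) := by
  have hmono : 0 ≤ ⟪(1/ε) • (u - Jε u) - (1/ε') • (v - Jε' v), Jε u - Jε' v⟫ :=
    (IsProxPoint.hasSubgradientAt (hJ u) hconv hε).inner_sub_sub_nonneg
      (IsProxPoint.hasSubgradientAt (hJ' v) hconv hε')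
  have hsplit : u - v = ((u - Jε u) - (v - Jε' v)) + (Jε u - Jε' v) := by abel
  rw [hsplit, inner_add_right]
  linarith [neg_mul_norm_mul_norm_le_inner_smul_sub_smul (u - Jε u) (v - Jε' v)
    (one_div_pos.2 hε).le (one_div_pos.2 hε').le]

/-- the Yosida approximations satisfy
`⟨(1/ε)Dφ_ε(u) − (1/ε')Dφ_{ε'}(v), u − v⟩ ≥ −(1/ε + 1/ε')·‖Dφ_ε(u)‖·‖Dφ_{ε'}(v)‖`. -/
theorem stmt_9 {H : Type*} [NormedAddCommGroup H] [InnerProductSpace ℝ H] [CompleteSpace H]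
    (φ : H → ℝ) (hconv : ConvexOn ℝ Set.univ φ) (hlsc : LowerSemicontinuous φ)
    (hφ0 : φ 0 = 0) (hφnn : ∀ y : H, 0 ≤ φ y)
    (ε ε' : ℝ) (hε : 0 < ε) (hε' : 0 < ε')
    (Jε Jε' : H → H)
    (hJ : ∀ u v : H, (1/2) * ‖u - Jε u‖^2 + ε * φ (Jε u) ≤ (1/2) * ‖u - v‖^2 + ε * φ v)
    (hJ' : ∀ u v : H, (1/2) * ‖u - Jε' u‖^2 + ε' * φ (Jε' u) ≤ (1/2) * ‖u - v‖^2 + ε' * φ v)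
    (u v : H) :
    ⟪(1/ε) • (u - Jε u) - (1/ε') • (v - Jε' v), u - v⟫ ≥
      -(1/ε + 1/ε') * (‖u - Jε u‖ * ‖v - Jε' v‖) :=
  stmt_9_general φ hconv ε ε' hε hε' Jε Jε' hJ hJ' u v
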